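/- arXiv:2303.07276 — 2 statements merged into one kernel-verified Lean document; each statement's English description precedes it below -/
import Mathlib

section
/- Fix K ≥ 1, rewards 0 ≤ r_1 < r_2 < ... < r_K, capacities c_1^M, ..., c_K^M > 0 with total C^M = Σ_k c_k^M, N ≥ 1, prices p_1, ..., p_N ≥ 0, and ε ∈ [0,1]^N. For every c ∈ F_c := {c ∈ ℝ^N : c_i ≥ 0 for all i, Σ_i c_i ≤ C^M}, one has cost(ε, c) = max_{k' ∈ {1,...,K}} cost(ε, c, k'), where cost(ε, c, k') := Σ_{k < k'} (r_k − r_{k'}) c_k^M + Σ_{i=1}^N c_i (r_{k'} ε_i − p_i), cost(ε, c) := Σ_{k < k_c} (r_k − r_{k_c}) c_k^M + Σ_{i=1}^N c_i (r_{k_c} ε_i − p_i), and k_c = k_c(ε, c) := min{ q ∈ {1,...,K} : Σ_i ε_i c_i ≤ Σ_{k=1}^q c_k^M } is the critical type. -/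
open scoped Classical in
/-- The critical type `k_c(ε, c)`: the least machine type `q` such that the total
deployed capacity `∑ i, ε i * c i` is covered by types `1, …, q`. -/
noncomputable def kcrit {K N : ℕ} (hK : 0 < K) (cM : Fin K → ℝ)
    (ε c : Fin N → ℝ) : Fin K :=
  let S := (Finset.univ : Finset (Fin K)).filter fun q =>
      (∑ i, ε i * c i) ≤ ∑ k ∈ Finset.univ.filter (fun k => k ≤ q), cM k
  if h : S.Nonempty then S.min' h else ⟨0, hK⟩

/-- The cost of committing profile `c` under deployment rates `ε`:
`∑_{k < k_c} (r k - r k_c) * cM k + ∑ i, c i * (r k_c * ε i - p i)`. -/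
noncomputable def acost {K N : ℕ} (hK : 0 < K) (r cM : Fin K → ℝ)
    (p ε c : Fin N → ℝ) : ℝ :=
  (∑ k ∈ Finset.univ.filter (fun k => k < kcrit hK cM ε c),
      (r k - r (kcrit hK cM ε c)) * cM k)
    + ∑ i, c i * (r (kcrit hK cM ε c) * ε i - p i)

/-- The affine surrogate cost with fixed critical index `k'`. -/
noncomputable def acostAffine {K N : ℕ} (r cM : Fin K → ℝ)
    (p ε c : Fin N → ℝ) (k' : Fin K) : ℝ :=
  (∑ k ∈ Finset.univ.filter (fun k => k < k'), (r k - r k') * cM k)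
    + ∑ i, c i * (r k' * ε i - p i)

/-!
Write `D = ∑ i, ε i * c i` for the deployed capacity and `S q = ∑_{k ≤ q} cM k` for the capacity
of the types up to `q`. Passing from the surrogate with index `q` to the one with index `q + 1`
adds `(r (q + 1) - r q) * (D - S q)`. Since `S` is increasing and `D ≤ ∑ c i ≤ C^M` on the
feasible region, `k_c` is the least `q` with `D ≤ S q`; so `D - S q` is positive for `q < k_c` and
nonpositive for `q ≥ k_c`. As `r` is increasing, the surrogate costs therefore increase up to
`k_c` and decrease after it: their maximum is attained at `k_c`, where the surrogate is the cost
itself.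
-/

open Finset Order

theorem apply_le_of_le_succ_of_succ_le {α β : Type*} [LinearOrder α] [SuccOrder α]
    [IsSuccArchimedean α] [Preorder β] {f : α → β} {m : α}
    (hup : ∀ a, ¬IsMax a → a < m → f a ≤ f (succ a))
    (hdown : ∀ a, ¬IsMax a → m ≤ a → f (succ a) ≤ f a) (a : α) : f a ≤ f m := by
  rcases le_total a m with ham | hma
  · refine monotoneOn_of_le_succ Set.ordConnected_Iic (fun b hb _ hbm => ?_)
      (Set.mem_Iic.2 ham) Set.self_mem_Iic ham
    exact hup b hb ((lt_succ_of_not_isMax hb).trans_le hbm)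
  · exact antitoneOn_of_succ_le Set.ordConnected_Ici (fun b hb hmb _ => hdown b hb hmb)
      Set.self_mem_Ici (Set.mem_Ici.2 hma) hma

section

variable {K N : ℕ}

theorem sum_filter_le_eq_sum_filter_lt_add (q : Fin K) (f : Fin K → ℝ) :
    ∑ k ∈ univ.filter (fun k => k ≤ q), f k
      = ∑ k ∈ univ.filter (fun k => k < q), f k + f q := by
  rw [filter_ge_eq_Iic, filter_gt_eq_Iio, sum_Iio_add_eq_sum_Iic]

theorem acostAffine_succ (r cM : Fin K → ℝ) (p ε c : Fin N → ℝ) {q : Fin K}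
    (hq : ¬IsMax q) :
    acostAffine r cM p ε c (succ q)
      = acostAffine r cM p ε c q
        + (r (succ q) - r q)
          * (∑ i, ε i * c i - ∑ k ∈ univ.filter (fun k => k ≤ q), cM k) := by
  have hfilter : univ.filter (fun k => k < succ q) = univ.filter (fun k => k ≤ q) := by
    ext k
    simp [lt_succ_iff_of_not_isMax hq]
  have hcap : ∑ k ∈ univ.filter (fun k => k < q), (r k - r (succ q)) * cM k
      = ∑ k ∈ univ.filter (fun k => k < q), (r k - r q) * cM k
        - (r (succ q) - r q) * ∑ k ∈ univ.filter (fun k => k < q), cM k := by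
    rw [mul_sum, ← sum_sub_distrib]
    exact sum_congr rfl fun k _ => by ring
  have hprog : ∑ i, c i * (r (succ q) * ε i - p i)
      = ∑ i, c i * (r q * ε i - p i) + (r (succ q) - r q) * ∑ i, ε i * c i := by
    rw [mul_sum, ← sum_add_distrib]
    exact sum_congr rfl fun i _ => by ring
  rw [acostAffine, acostAffine, hfilter, sum_filter_le_eq_sum_filter_lt_add, hcap, hprog,
    sum_filter_le_eq_sum_filter_lt_add]
  ring

theorem kcrit_le_iff (hK : 0 < K) {cM : Fin K → ℝ} (hcM : ∀ k, 0 ≤ cM k) {ε c : Fin N → ℝ}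
    (hD : ∑ i, ε i * c i ≤ ∑ k, cM k) (q : Fin K) :
    kcrit hK cM ε c ≤ q ↔ ∑ i, ε i * c i ≤ ∑ k ∈ univ.filter (fun k => k ≤ q), cM k := by
  classical
  have hcap_mono : Monotone fun q : Fin K => ∑ k ∈ univ.filter (fun k => k ≤ q), cM k :=
    fun a b hab => by
      simp only [filter_ge_eq_Iic]
      exact sum_le_sum_of_subset_of_nonneg (Iic_subset_Iic.2 hab) fun k _ _ => hcM k
  have hne : (univ.filter fun q : Fin K =>
      ∑ i, ε i * c i ≤ ∑ k ∈ univ.filter (fun k => k ≤ q), cM k).Nonempty := by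
    refine ⟨⟨K - 1, by omega⟩, mem_filter.2 ⟨mem_univ _, ?_⟩⟩
    rwa [filter_true_of_mem fun k _ => Fin.le_def.2 (Nat.le_sub_one_of_lt k.isLt)]
  rw [kcrit, dif_pos hne]
  exact ⟨fun h => le_trans (mem_filter.1 (min'_mem _ hne)).2 (hcap_mono h),
    fun hq => min'_le _ q (mem_filter.2 ⟨mem_univ q, hq⟩)⟩

theorem acost_eq_acostAffine_kcrit (hK : 0 < K) (r cM : Fin K → ℝ) (p ε c : Fin N → ℝ) :
    acost hK r cM p ε c = acostAffine r cM p ε c (kcrit hK cM ε c) :=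
  rfl

end

theorem cost_eq_max_affine_general
    (K N : ℕ) (hK : 0 < K)
    (r cM : Fin K → ℝ) (hr : StrictMono r)
    (hcM : ∀ k, 0 < cM k)
    (p ε : Fin N → ℝ) (hε : ∀ i, ε i ∈ Set.Icc (0:ℝ) 1)
    (c : Fin N → ℝ) (hc : ∀ i, 0 ≤ c i) (hcsum : ∑ i, c i ≤ ∑ k, cM k) :
    acost hK r cM p ε c
      = Finset.univ.sup' (Finset.univ_nonempty_iff.mpr ⟨⟨0, hK⟩⟩)
          (acostAffine r cM p ε c) := by
  have hD : ∑ i, ε i * c i ≤ ∑ k, cM k :=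
    (sum_le_sum fun i _ => mul_le_of_le_one_left (hc i) (hε i).2).trans hcsum
  have hkc := kcrit_le_iff hK (fun k => (hcM k).le) hD
  rw [acost_eq_acostAffine_kcrit]
  refine le_antisymm (le_sup' _ (mem_univ _)) (sup'_le _ _ fun q _ => ?_)
  refine apply_le_of_le_succ_of_succ_le (fun a ha hlt => ?_) (fun a ha hle => ?_) q
  · have hgap := not_le.1 ((hkc a).not.1 hlt.not_ge)
    rw [acostAffine_succ _ _ _ _ _ ha]
    exact le_add_of_nonneg_right
      (mul_nonneg (sub_nonneg.2 (hr.monotone (le_succ a))) (sub_nonneg.2 hgap.le))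
  · rw [acostAffine_succ _ _ _ _ _ ha]
    exact add_le_of_nonpos_right
      (mul_nonpos_of_nonneg_of_nonpos (sub_nonneg.2 (hr.monotone (le_succ a)))
        (sub_nonpos.2 ((hkc a).1 hle)))

/-- On the feasible region, the cost equals the pointwise
maximum of the `K` affine surrogate costs. -/
theorem cost_eq_max_affine
    (K N : ℕ) (hK : 0 < K) (hN : 0 < N)
    (r cM : Fin K → ℝ) (hr0 : 0 ≤ r ⟨0, hK⟩) (hr : StrictMono r)
    (hcM : ∀ k, 0 < cM k)
    (p ε : Fin N → ℝ) (hp : ∀ i, 0 ≤ p i) (hε : ∀ i, ε i ∈ Set.Icc (0:ℝ) 1)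
    (c : Fin N → ℝ) (hc : ∀ i, 0 ≤ c i) (hcsum : ∑ i, c i ≤ ∑ k, cM k) :
    acost hK r cM p ε c
      = Finset.univ.sup' (Finset.univ_nonempty_iff.mpr ⟨⟨0, hK⟩⟩)
          (acostAffine r cM p ε c) :=
  cost_eq_max_affine_general K N hK r cM hr hcM p ε hε c hc hcsum
end

section
/- Fix K ≥ 1, rewards 0 ≤ r_1 < r_2 < ... < r_K, capacities c_1^M, ..., c_K^M > 0 with total C^M = Σ_k c_k^M, N ≥ 1, prices p_1, ..., p_N ≥ 0, and ε ∈ [0,1]^N. Then the function c ↦ cost(ε, c) is convex on the convex set F_c := {c ∈ ℝ^N : c_i ≥ 0 for all i, Σ_i c_i ≤ C^M}. -/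
/-!
With the critical type fixed to `q`, the cost is affine in the deployed capacity
`x = ∑ i, ε i * c i`, namely `costPiece r cM q x - p ⬝ᵥ c`. Comparing two pieces term by
term in the machine type `k` shows that the piece of the critical type is the largest: a
piece `j > q` exceeds it by at most `(r j - r q) * (x - ∑_{k ≤ q} cM k) ≤ 0`, and a piece
`j < q` by at most `(r j - r q) * (x - ∑_{k < q} cM k) ≤ 0`. On the feasible region
`x ≤ C^M`, so the critical type is a genuine minimum (not the default value of `kcrit`), and
the cost is the maximum of finitely many affine functions of `c`, hence convex.
-/

open Finset

theorem ConvexOn.finset_sup' {𝕜 E ι β : Type*} [Semiring 𝕜] [PartialOrder 𝕜]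
    [AddCommMonoid E] [LinearOrder β] [AddCommMonoid β] [IsOrderedAddMonoid β]
    [SMul 𝕜 E] [Module 𝕜 β] [PosSMulStrictMono 𝕜 β] {s : Set E} {t : Finset ι}
    (H : t.Nonempty) {f : ι → E → β} (hf : ∀ i ∈ t, ConvexOn 𝕜 s (f i)) :
    ConvexOn 𝕜 s (t.sup' H f) :=
  sup'_induction H f (fun _ h₁ _ h₂ => h₁.sup h₂) hf

section CostPiece

variable {K : ℕ} {r cM : Fin K → ℝ}

noncomputable def costPiece (r cM : Fin K → ℝ) (q : Fin K) (x : ℝ) : ℝ :=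
  (∑ k ∈ univ.filter (fun k => k < q), (r k - r q) * cM k) + r q * x

theorem convexOn_costPiece (q : Fin K) : ConvexOn ℝ Set.univ (costPiece r cM q) :=
  ⟨convex_univ, fun x _ y _ a b _ _ hab => le_of_eq <| by
    simp only [costPiece, smul_eq_mul]
    linear_combination (-(∑ k ∈ univ.filter (fun k => k < q), (r k - r q) * cM k)) * hab⟩

theorem costPiece_le_of_lt_of_le (hr : Monotone r) (hcM : ∀ k, 0 ≤ cM k) {q j : Fin K}
    (hqj : q < j) {x : ℝ} (hx : x ≤ ∑ k ∈ univ.filter (fun k => k ≤ q), cM k) :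
    costPiece r cM j x ≤ costPiece r cM q x := by
  have hsum : ∑ k ∈ univ.filter (fun k => k < j), (r k - r j) * cM k ≤
      ∑ k ∈ univ.filter (fun k => k < q), (r k - r q) * cM k
        + (r q - r j) * ∑ k ∈ univ.filter (fun k => k ≤ q), cM k := by
    simp only [sum_filter, mul_sum, ← sum_add_distrib]
    gcongr with k
    rcases lt_trichotomy k q with hkq | rfl | hqk
    · simp only [if_pos hkq, if_pos hkq.le, if_pos (hkq.trans hqj)]
      linarith
    · simp only [if_pos hqj, lt_irrefl, le_refl, if_true, if_false]
      linarith
    · simp only [if_neg hqk.not_gt, if_neg hqk.not_ge, mul_zero, add_zero]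
      split_ifs with hkj
      · exact mul_nonpos_of_nonpos_of_nonneg (sub_nonpos.2 (hr hkj.le)) (hcM k)
      · rfl
  have hrqj : r q ≤ r j := hr hqj.le
  unfold costPiece
  nlinarith

theorem costPiece_le_of_lt_of_ge (hr : Monotone r) (hcM : ∀ k, 0 ≤ cM k) {q j : Fin K}
    (hjq : j < q) {x : ℝ} (hx : ∑ k ∈ univ.filter (fun k => k < q), cM k ≤ x) :
    costPiece r cM j x ≤ costPiece r cM q x := by
  have hsum : ∑ k ∈ univ.filter (fun k => k < j), (r k - r j) * cM k ≤
      ∑ k ∈ univ.filter (fun k => k < q), (r k - r q) * cM k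
        + (r q - r j) * ∑ k ∈ univ.filter (fun k => k < q), cM k := by
    simp only [sum_filter, mul_sum, ← sum_add_distrib]
    gcongr with k
    by_cases hkq : k < q
    · simp only [if_pos hkq]
      split_ifs with hkj
      · linarith
      · have := mul_nonneg (sub_nonneg.2 (hr (not_lt.1 hkj))) (hcM k)
        linarith
    · have hkj : ¬k < j := fun hkj => hkq (hkj.trans hjq)
      simp only [if_neg hkq, if_neg hkj, mul_zero, add_zero, le_refl]
  have hrjq : r j ≤ r q := hr hjq.le
  unfold costPiece
  nlinarith

theorem costPiece_le_of_isLeast (hr : Monotone r) (hcM : ∀ k, 0 ≤ cM k) {x : ℝ} {q : Fin K}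
    (hq : IsLeast {q | x ≤ ∑ k ∈ univ.filter (fun k => k ≤ q), cM k} q) (j : Fin K) :
    costPiece r cM j x ≤ costPiece r cM q x := by
  rcases lt_trichotomy j q with hjq | rfl | hqj
  · apply costPiece_le_of_lt_of_ge hr hcM hjq
    let m : Fin K := ⟨q - 1, by omega⟩
    have hmq : m < q := Fin.lt_def.2 (by simp only [m]; have := Fin.lt_def.1 hjq; omega)
    have hlt : univ.filter (fun k => k < q) = univ.filter (fun k => k ≤ m) := by
      ext k
      simp only [mem_filter, mem_univ, true_and, Fin.lt_def, Fin.le_def, m]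
      omega
    rw [hlt]
    exact (not_le.1 fun hm => (hq.2 hm).not_gt hmq).le
  · exact le_rfl
  · exact costPiece_le_of_lt_of_le hr hcM hqj hq.1

end CostPiece

theorem isLeast_kcrit {K N : ℕ} (hK : 0 < K) (cM : Fin K → ℝ) (ε c : Fin N → ℝ)
    (hc : ∑ i, ε i * c i ≤ ∑ k, cM k) :
    IsLeast {q | ∑ i, ε i * c i ≤ ∑ k ∈ univ.filter (fun k => k ≤ q), cM k}
      (kcrit hK cM ε c) := by
  have hne : (univ.filter fun q : Fin K =>
      ∑ i, ε i * c i ≤ ∑ k ∈ univ.filter (fun k => k ≤ q), cM k).Nonempty :=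
    ⟨⟨K - 1, by omega⟩, mem_filter.2 ⟨mem_univ _, by
      rwa [filter_true_of_mem fun k _ => Fin.le_def.2 (by simp only; omega)]⟩⟩
  rw [kcrit, dif_pos hne]
  exact ⟨(mem_filter.1 (min'_mem _ hne)).2,
    fun q hq => min'_le _ _ (mem_filter.2 ⟨mem_univ q, hq⟩)⟩

theorem acost_eq_sup'_costPiece {K N : ℕ} (hK : 0 < K) {r cM : Fin K → ℝ} (hr : Monotone r)
    (hcM : ∀ k, 0 ≤ cM k) (hne : (univ : Finset (Fin K)).Nonempty) (p ε c : Fin N → ℝ)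
    (hc : ε ⬝ᵥ c ≤ ∑ k, cM k) :
    acost hK r cM p ε c = univ.sup' hne (costPiece r cM) (ε ⬝ᵥ c) - p ⬝ᵥ c := by
  have hq : IsLeast {q | ε ⬝ᵥ c ≤ ∑ k ∈ univ.filter (fun k => k ≤ q), cM k}
      (kcrit hK cM ε c) := isLeast_kcrit hK cM ε c hc
  have hmax : univ.sup' hne (fun j => costPiece r cM j (ε ⬝ᵥ c))
      = costPiece r cM (kcrit hK cM ε c) (ε ⬝ᵥ c) :=
    le_antisymm (sup'_le _ _ fun j _ => costPiece_le_of_isLeast hr hcM hq j)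
      (le_sup' (fun j => costPiece r cM j (ε ⬝ᵥ c)) (mem_univ _))
  rw [Finset.sup'_apply, hmax]
  simp only [acost, costPiece, dotProduct, mul_sum, add_sub_assoc, ← sum_sub_distrib]
  congr 1
  exact sum_congr rfl fun i _ => by ring

theorem convex_nonneg_sum_le {ι : Type*} [Fintype ι] (C : ℝ) :
    Convex ℝ {c : ι → ℝ | (∀ i, 0 ≤ c i) ∧ ∑ i, c i ≤ C} := by
  rintro c ⟨hc0, hcC⟩ d ⟨hd0, hdC⟩ a b ha hb hab
  refine ⟨fun i => add_nonneg (smul_nonneg ha (hc0 i)) (smul_nonneg hb (hd0 i)), ?_⟩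
  simp only [Pi.add_apply, Pi.smul_apply, smul_eq_mul, sum_add_distrib, ← mul_sum]
  calc a * ∑ i, c i + b * ∑ i, d i ≤ a * C + b * C := by gcongr
    _ = C := by rw [← add_mul, hab, one_mul]

theorem acost_convexOn_general
    (K N : ℕ) (hK : 0 < K)
    (r cM : Fin K → ℝ) (hr : StrictMono r)
    (hcM : ∀ k, 0 < cM k)
    (p ε : Fin N → ℝ) (hε : ∀ i, ε i ∈ Set.Icc (0:ℝ) 1) :
    ConvexOn ℝ {c : Fin N → ℝ | (∀ i, 0 ≤ c i) ∧ ∑ i, c i ≤ ∑ k, cM k}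
      (fun c => acost hK r cM p ε c) := by
  have hne : (univ : Finset (Fin K)).Nonempty := ⟨⟨0, hK⟩, mem_univ _⟩
  have hΦ : ConvexOn ℝ Set.univ (univ.sup' hne (costPiece r cM)) :=
    ConvexOn.finset_sup' hne fun q _ => convexOn_costPiece q
  have hg : ConvexOn ℝ Set.univ
      fun c => univ.sup' hne (costPiece r cM) (ε ⬝ᵥ c) - p ⬝ᵥ c :=
    (hΦ.comp_linearMap (dotProductEquiv ℝ (Fin N) ε)).sub
      ((dotProductEquiv ℝ (Fin N) p).concaveOn convex_univ)
  refine (hg.subset (Set.subset_univ _) (convex_nonneg_sum_le _)).congr fun c ⟨hc0, hcC⟩ => ?_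
  have hdeployed : ε ⬝ᵥ c ≤ ∑ i, c i :=
    sum_le_sum fun i _ => mul_le_of_le_one_left (hc0 i) (hε i).2
  exact (acost_eq_sup'_costPiece hK hr.monotone (fun k => (hcM k).le) hne p ε c
    (hdeployed.trans hcC)).symm

/-- For fixed deployment rates `ε ∈ [0,1]^N`, the map
`c ↦ cost(ε, c)` is convex on the feasible region
`F_c = {c : c i ≥ 0, ∑ i, c i ≤ C^M}`. -/
theorem acost_convexOn
    (K N : ℕ) (hK : 0 < K) (hN : 0 < N)
    (r cM : Fin K → ℝ) (hr0 : 0 ≤ r ⟨0, hK⟩) (hr : StrictMono r)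
    (hcM : ∀ k, 0 < cM k)
    (p ε : Fin N → ℝ) (hp : ∀ i, 0 ≤ p i) (hε : ∀ i, ε i ∈ Set.Icc (0:ℝ) 1) :
    ConvexOn ℝ {c : Fin N → ℝ | (∀ i, 0 ≤ c i) ∧ ∑ i, c i ≤ ∑ k, cM k}
      (fun c => acost hK r cM p ε c) :=
  acost_convexOn_general K N hK r cM hr hcM p ε hε
end
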